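/- Let 0 < q ≤ p < ∞ and d ≥ 1. With h_k (N ≤ k ≤ 2^{Nd}) the deterministic indicator functions built from cubes of sidelength 2^{-k-M} placed on a grid of spacing 2^{-k+N} in [0,1)^d, the L^p norm of (∑_{k=N}^{2^{Nd}} h_k^q)^{1/q} = (∑_k h_k)^{1/q} is bounded by a constant depending only on p, q, d, M and not on N. -/

import Mathlib

/-!
Since `S = ∑ₖ hₖ` is integer valued, `(S ^ (1/q)) ^ p ≤ S ^ (m + 1)` for any natural `m + 1 ≥ p / q`,
so it suffices to bound the moments `∫ S ^ (m + 1)` uniformly in `N`. For nonnegative `aₖ`,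
`(∑_{k ≥ k₀} aₖ) ^ (m + 1) ≤ (m + 1) ∑_{k ≥ k₀} aₖ (∑_{j ≥ k} aⱼ) ^ m`, so the moment of the tail
sum over a set `s` is controlled by the lower moments of the tail sums over `s ∩ supp hₖ`, at
ever finer scales `k`. Each `supp hₖ` is the product `Dₖ ^ d` of a union `Dₖ` of intervals of
length `2 ^ (-k - M)` spaced `2 ^ (N - k)` apart, and a union of `c` intervals of length
`2 ^ (-k - M)` meets `Dⱼ` (`j ≥ k`) in at most `c (2 ^ (j - k - M - N) + 2)` intervals of length
`2 ^ (-j - M)`. Hence passing from scale `k` to scale `j` multiplies the total length by at most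
`2 ^ (-M - N) + 2 ^ (1 - (j - k))`; the `d`-th powers of these factors, summed over the at most
`2 ^ (N d) + 1` scales `j`, are bounded independently of `N`, and induction on `m` bounds the
moments.
-/

open MeasureTheory Finset
open scoped Nat

/-- The support of `h_k`: union over `j ∈ {0,…,2^{k-N}-1}^d` of the cubes
`∏_i [j_i 2^{-k+N}, j_i 2^{-k+N} + 2^{-k-M}]`. -/
def cubeUnion (d N M k : ℕ) : Set (EuclideanSpace ℝ (Fin d)) :=
  ⋃ (j : Fin d → ℕ) (_ : ∀ i, j i < 2 ^ (k - N)),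
    (WithLp.ofLp : EuclideanSpace ℝ (Fin d) → (Fin d → ℝ)) ⁻¹' Set.univ.pi fun i =>
      Set.Icc ((j i : ℝ) * (2 : ℝ) ^ ((N : ℤ) - (k : ℤ)))
        ((j i : ℝ) * (2 : ℝ) ^ ((N : ℤ) - (k : ℤ)) + (2 : ℝ) ^ (-(k : ℤ) - (M : ℤ)))

section OrderedSemiring

variable {R : Type*} [CommSemiring R] [PartialOrder R] [IsOrderedRing R]

theorem add_pow_succ_le {a b : R} (ha : 0 ≤ a) (hb : 0 ≤ b) (n : ℕ) :
    (a + b) ^ (n + 1) ≤ (n + 1) * a * (a + b) ^ n + b ^ (n + 1) := by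
  induction n with
  | zero => simp
  | succ n ih =>
    have hbn : b ^ (n + 1) ≤ (a + b) ^ (n + 1) := by gcongr; exact le_add_of_nonneg_left ha
    calc (a + b) ^ (n + 1 + 1) = (a + b) ^ (n + 1) * (a + b) := pow_succ _ _
      _ ≤ ((n + 1) * a * (a + b) ^ n + b ^ (n + 1)) * (a + b) := by gcongr
      _ = (n + 1) * a * (a + b) ^ (n + 1) + a * b ^ (n + 1) + b ^ (n + 1 + 1) := by ring
      _ ≤ (n + 1) * a * (a + b) ^ (n + 1) + a * (a + b) ^ (n + 1) + b ^ (n + 1 + 1) := by gcongr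
      _ = _ := by push_cast; ring

theorem pow_sum_Icc_le_sum_mul_pow_tail {a : ℕ → R} (ha : ∀ j, 0 ≤ a j) (K m k : ℕ) :
    (∑ j ∈ Icc k K, a j) ^ (m + 1)
      ≤ (m + 1) * ∑ j ∈ Icc k K, a j * (∑ i ∈ Icc j K, a i) ^ m := by
  induction hn : K + 1 - k generalizing k with
  | zero => simp [Icc_eq_empty_of_lt (show K < k by omega)]
  | succ n ih =>
    have hk : k ≤ K := by omega
    have split (f : ℕ → R) : ∑ j ∈ Icc k K, f j = f k + ∑ j ∈ Icc (k + 1) K, f j := by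
      rw [← insert_Icc_add_one_left_eq_Icc hk, sum_insert (by simp)]
    simp only [split]
    calc (a k + ∑ j ∈ Icc (k + 1) K, a j) ^ (m + 1)
        ≤ (m + 1) * a k * (a k + ∑ j ∈ Icc (k + 1) K, a j) ^ m
          + (∑ j ∈ Icc (k + 1) K, a j) ^ (m + 1) :=
          add_pow_succ_le (ha k) (sum_nonneg fun j _ => ha j) m
      _ ≤ (m + 1) * a k * (a k + ∑ j ∈ Icc (k + 1) K, a j) ^ m
          + (m + 1) * ∑ j ∈ Icc (k + 1) K, a j * (∑ i ∈ Icc j K, a i) ^ m := by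
          gcongr; exact ih (k + 1) (by omega)
      _ = _ := by ring

end OrderedSemiring

section TailCount

variable {α : Type*} [MeasurableSpace α]

noncomputable def tailCount (E : ℕ → Set α) (K k : ℕ) (x : α) : ENNReal :=
  ∑ j ∈ Icc k K, (E j).indicator (fun _ => 1) x

theorem measurable_tailCount {E : ℕ → Set α} (hE : ∀ j, MeasurableSet (E j)) (K k : ℕ) :
    Measurable (tailCount E K k) :=
  Finset.measurable_sum _ fun j _ => measurable_const.indicator (hE j)

theorem setLIntegral_tailCount_pow_succ_le (μ : Measure α) {E : ℕ → Set α}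
    (hE : ∀ j, MeasurableSet (E j)) (s : Set α) (K k m : ℕ) :
    ∫⁻ x in s, tailCount E K k x ^ (m + 1) ∂μ
      ≤ (m + 1) * ∑ j ∈ Icc k K, ∫⁻ x in E j ∩ s, tailCount E K j x ^ m ∂μ := by
  have hmeas : ∀ j, Measurable ((E j).indicator fun x => tailCount E K j x ^ m) := fun j =>
    ((measurable_tailCount hE K j).pow_const m).indicator (hE j)
  calc ∫⁻ x in s, tailCount E K k x ^ (m + 1) ∂μ
      ≤ ∫⁻ x in s, (m + 1) * ∑ j ∈ Icc k K,
          (E j).indicator (fun x => tailCount E K j x ^ m) x ∂μ := by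
        refine lintegral_mono fun x => ?_
        refine (pow_sum_Icc_le_sum_mul_pow_tail (fun _ => zero_le) K m k).trans_eq
          (congrArg _ (sum_congr rfl fun j _ => ?_))
        by_cases hx : x ∈ E j <;> simp [hx, tailCount]
    _ = _ := by
        rw [lintegral_const_mul _ (Finset.measurable_sum _ fun j _ => hmeas j),
          lintegral_finsetSum _ fun j _ => hmeas j]
        simp_rw [lintegral_indicator (hE _), Measure.restrict_restrict (hE _)]

end TailCount

def CoveredByIntervals (c ℓ : ℝ) (A : Set ℝ) : Prop :=
  ∃ t : Finset ℝ, (#t : ℝ) ≤ c ∧ A ⊆ ⋃ x ∈ t, Set.Icc x (x + ℓ)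

namespace CoveredByIntervals

variable {c ℓ : ℝ} {A : Set ℝ}

theorem nonneg (h : CoveredByIntervals c ℓ A) : 0 ≤ c :=
  let ⟨_, ht, _⟩ := h; (Nat.cast_nonneg _).trans ht

theorem mono (h : CoveredByIntervals c ℓ A) {B : Set ℝ} (hBA : B ⊆ A) :
    CoveredByIntervals c ℓ B :=
  let ⟨t, ht, hA⟩ := h; ⟨t, ht, hBA.trans hA⟩

theorem volume_le (h : CoveredByIntervals c ℓ A) (hℓ : 0 ≤ ℓ) :
    volume A ≤ ENNReal.ofReal (c * ℓ) := by
  obtain ⟨t, ht, hA⟩ := h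
  calc volume A ≤ ∑ x ∈ t, volume (Set.Icc x (x + ℓ)) :=
        (measure_mono hA).trans (measure_biUnion_finset_le _ _)
    _ = ENNReal.ofReal (#t * ℓ) := by
      simp [Real.volume_Icc, ENNReal.ofReal_mul, ENNReal.ofReal_natCast]
    _ ≤ ENNReal.ofReal (c * ℓ) := by gcongr

end CoveredByIntervals

theorem coveredByIntervals_periodic_inter_Icc {g ℓ' ℓ : ℝ} (hg : 0 < g) (hℓ' : ℓ' ≤ g)
    (hℓ : 0 ≤ ℓ) (t : ℝ) :
    CoveredByIntervals (ℓ / g + 2) ℓ'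
      ((⋃ j : ℤ, Set.Icc (j * g) (j * g + ℓ')) ∩ Set.Icc t (t + ℓ)) := by
  -- only the grid intervals starting in `[t - ℓ', t + ℓ]` meet `[t, t + ℓ]`
  refine ⟨(Icc ⌈(t - ℓ') / g⌉ ⌊(t + ℓ) / g⌋).image fun j : ℤ => j * g, ?_, ?_⟩
  · have hfloor := Int.floor_le ((t + ℓ) / g)
    have hceil := Int.le_ceil ((t - ℓ') / g)
    have hratio : ℓ' / g ≤ 1 := (div_le_one hg).2 hℓ'
    calc (#((Icc ⌈(t - ℓ') / g⌉ ⌊(t + ℓ) / g⌋).image fun j : ℤ => j * g) : ℝ)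
        ≤ ((⌊(t + ℓ) / g⌋ + 1 - ⌈(t - ℓ') / g⌉).toNat : ℝ) := by
          exact_mod_cast card_image_le.trans (Int.card_Icc _ _).le
      _ = max ((⌊(t + ℓ) / g⌋ + 1 - ⌈(t - ℓ') / g⌉ : ℤ) : ℝ) 0 := by
          rw [← Int.cast_natCast, Int.toNat_eq_max]; push_cast; rfl
      _ ≤ ℓ / g + 2 := by
          refine max_le ?_ (by positivity)
          push_cast
          have : (t + ℓ) / g - (t - ℓ') / g = ℓ / g + ℓ' / g := by ring
          linarith
  · rintro x ⟨hx, hxt⟩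
    obtain ⟨j, hxj⟩ := Set.mem_iUnion.1 hx
    refine Set.mem_biUnion (mem_image_of_mem _ (mem_Icc.2 ⟨?_, ?_⟩)) hxj
    · rw [Int.ceil_le, div_le_iff₀ hg]; linarith [hxj.2, hxt.1]
    · rw [Int.le_floor, le_div_iff₀ hg]; linarith [hxj.1, hxt.2]

theorem CoveredByIntervals.periodic_inter {c ℓ g ℓ' : ℝ} {A : Set ℝ}
    (h : CoveredByIntervals c ℓ A) (hg : 0 < g) (hℓ' : ℓ' ≤ g) (hℓ : 0 ≤ ℓ) :
    CoveredByIntervals (c * (ℓ / g + 2)) ℓ'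
      ((⋃ j : ℤ, Set.Icc (j * g) (j * g + ℓ')) ∩ A) := by
  obtain ⟨t, ht, hA⟩ := h
  choose u hu hcover using coveredByIntervals_periodic_inter_Icc hg hℓ' hℓ
  refine ⟨t.biUnion u, ?_, ?_⟩
  · calc (#(t.biUnion u) : ℝ) ≤ ∑ x ∈ t, (#(u x) : ℝ) := mod_cast card_biUnion_le
      _ ≤ ∑ _x ∈ t, (ℓ / g + 2) := sum_le_sum fun x _ => hu x
      _ ≤ c * (ℓ / g + 2) := by rw [sum_const, nsmul_eq_mul]; gcongr
  · rintro y ⟨hy, hyA⟩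
    obtain ⟨x, hxt, hyx⟩ := Set.mem_iUnion₂.1 (hA hyA)
    obtain ⟨z, hzu, hyz⟩ := Set.mem_iUnion₂.1 (hcover x ⟨hy, hyx⟩)
    exact Set.mem_biUnion (mem_biUnion.2 ⟨x, hxt, hzu⟩) hyz

noncomputable def cubeSide (M k : ℕ) : ℝ := 2 ^ (-(k : ℤ) - M)

noncomputable def cubeSpacing (N k : ℕ) : ℝ := 2 ^ ((N : ℤ) - k)

theorem cubeSide_pos (M k : ℕ) : 0 < cubeSide M k := zpow_pos two_pos _

theorem cubeSpacing_pos (N k : ℕ) : 0 < cubeSpacing N k := zpow_pos two_pos _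

theorem cubeSide_le_cubeSpacing (N M k : ℕ) : cubeSide M k ≤ cubeSpacing N k :=
  zpow_le_zpow_right₀ one_le_two (by omega)

theorem cubeSide_div_cubeSpacing_add_two_mul (N M k k' : ℕ) :
    (cubeSide M k / cubeSpacing N k' + 2) * cubeSide M k'
      = cubeSide M k * (2 ^ (-(N : ℤ) - M) + 2 * 2 ^ ((k : ℤ) - k')) := by
  simp only [cubeSide, cubeSpacing, zpow_sub₀ (two_ne_zero' ℝ), zpow_neg, zpow_natCast]
  field_simp

theorem two_pow_sub_mul_cubeSide {N k : ℕ} (hk : N ≤ k) (M : ℕ) :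
    (2 : ℝ) ^ (k - N) * cubeSide M k = 2 ^ (-(N : ℤ) - M) := by
  rw [cubeSide, ← zpow_natCast, ← zpow_add₀ (two_ne_zero' ℝ)]
  congr 1
  omega

def intervalUnion (N M k : ℕ) : Set ℝ :=
  ⋃ (j : ℕ) (_ : j < 2 ^ (k - N)),
    Set.Icc (j * cubeSpacing N k) (j * cubeSpacing N k + cubeSide M k)

theorem measurableSet_intervalUnion (N M k : ℕ) : MeasurableSet (intervalUnion N M k) :=
  .iUnion fun _ => .iUnion fun _ => measurableSet_Icc

theorem intervalUnion_subset_periodic (N M k : ℕ) :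
    intervalUnion N M k
      ⊆ ⋃ j : ℤ, Set.Icc (j * cubeSpacing N k) (j * cubeSpacing N k + cubeSide M k) :=
  Set.iUnion₂_subset fun j _ => Set.subset_iUnion_of_subset (j : ℤ) (by simp)

theorem coveredByIntervals_intervalUnion (N M k : ℕ) :
    CoveredByIntervals (2 ^ (k - N)) (cubeSide M k) (intervalUnion N M k) := by
  refine ⟨(range (2 ^ (k - N))).image fun j : ℕ => j * cubeSpacing N k, ?_, ?_⟩
  · exact_mod_cast card_image_le.trans (card_range _).le
  · exact Set.iUnion₂_subset fun j hj =>
      Set.subset_biUnion_of_mem (u := fun x => Set.Icc x (x + cubeSide M k))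
        (mem_image_of_mem _ (mem_range.2 hj))

theorem CoveredByIntervals.intervalUnion_inter {c ℓ : ℝ} {A : Set ℝ}
    (h : CoveredByIntervals c ℓ A) (hℓ : 0 ≤ ℓ) (N M k : ℕ) :
    CoveredByIntervals (c * (ℓ / cubeSpacing N k + 2)) (cubeSide M k)
      (intervalUnion N M k ∩ A) :=
  (h.periodic_inter (cubeSpacing_pos N k) (cubeSide_le_cubeSpacing N M k) hℓ).mono
    (Set.inter_subset_inter_left _ (intervalUnion_subset_periodic N M k))

def cubePi (d : ℕ) (A : Set ℝ) : Set (EuclideanSpace ℝ (Fin d)) :=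
  WithLp.ofLp ⁻¹' Set.univ.pi fun _ => A

theorem cubePi_inter (d : ℕ) (A B : Set ℝ) :
    cubePi d (A ∩ B) = cubePi d A ∩ cubePi d B := by
  simp only [cubePi, ← Set.preimage_inter, Set.pi_inter_distrib]

theorem measurableSet_cubePi (d : ℕ) {A : Set ℝ} (hA : MeasurableSet A) :
    MeasurableSet (cubePi d A) :=
  (MeasurableSet.univ_pi fun _ => hA).preimage (PiLp.volume_preserving_ofLp (Fin d)).measurable

theorem volume_cubePi (d : ℕ) (A : Set ℝ) : volume (cubePi d A) = volume A ^ d :=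
  calc volume (cubePi d A) = volume (Set.univ.pi fun _ : Fin d => A) :=
        (EuclideanSpace.volume_preserving_symm_measurableEquiv_toLp _).measure_preimage_equiv _
    _ = volume A ^ d := by simp [volume_pi_pi]

theorem cubeUnion_eq_cubePi (d N M k : ℕ) :
    cubeUnion d N M k = cubePi d (intervalUnion N M k) := by
  ext x
  simp only [cubeUnion, cubePi, intervalUnion, cubeSide, cubeSpacing, Set.mem_iUnion,
    Set.mem_preimage, Set.mem_univ_pi]
  constructor
  · rintro ⟨j, hj, hx⟩ i
    exact ⟨j i, hj i, hx i⟩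
  · intro hx
    choose j hj hxj using hx
    exact ⟨j, hj, hxj⟩

theorem measurableSet_cubeUnion (d N M k : ℕ) : MeasurableSet (cubeUnion d N M k) := by
  rw [cubeUnion_eq_cubePi]
  exact measurableSet_cubePi d (measurableSet_intervalUnion N M k)

noncomputable def scaleSumBound (d : ℕ) : ℝ := 2 ^ (d - 1) * (2 + 2 ^ (d + 1))

theorem scaleSumBound_nonneg (d : ℕ) : 0 ≤ scaleSumBound d := by
  unfold scaleSumBound; positivity

theorem card_Icc_mul_pow_le_two (N M d k : ℕ) :
    (#(Icc k (2 ^ (N * d))) : ℝ) * ((2 : ℝ) ^ (-(N : ℤ) - M)) ^ d ≤ 2 := by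
  have hK : (1 : ℝ) ≤ 2 ^ (N * d) := one_le_pow₀ one_le_two
  have hcard : (#(Icc k (2 ^ (N * d))) : ℝ) ≤ 2 ^ (N * d) + 1 := by
    rw [Nat.card_Icc]; exact_mod_cast Nat.sub_le _ _
  have hρ : ((2 : ℝ) ^ (-(N : ℤ) - M)) ^ d ≤ ((2 : ℝ) ^ (N * d))⁻¹ :=
    calc ((2 : ℝ) ^ (-(N : ℤ) - M)) ^ d ≤ ((2 : ℝ) ^ (-(N : ℤ))) ^ d := by
          gcongr
          · norm_num
          · omega
      _ = ((2 : ℝ) ^ (N * d))⁻¹ := by rw [zpow_neg, zpow_natCast, inv_pow, pow_mul]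
  calc (#(Icc k (2 ^ (N * d))) : ℝ) * ((2 : ℝ) ^ (-(N : ℤ) - M)) ^ d
      ≤ (2 ^ (N * d) + 1) * ((2 : ℝ) ^ (N * d))⁻¹ := by gcongr
    _ ≤ 2 := by
      rw [add_mul, mul_inv_cancel₀ (by positivity)]
      linarith [inv_le_one_of_one_le₀ hK]

theorem sum_Icc_pow_add_two_pow_sub_le {d : ℕ} (hd : 1 ≤ d) (N M k : ℕ) :
    ∑ j ∈ Icc k (2 ^ (N * d)), ((2 : ℝ) ^ (-(N : ℤ) - M) + 2 * 2 ^ ((k : ℤ) - j)) ^ d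
      ≤ scaleSumBound d := by
  have hgeom :
      ∑ j ∈ Icc k (2 ^ (N * d)), (2 * (2 : ℝ) ^ ((k : ℤ) - j)) ^ d ≤ 2 ^ (d + 1) := by
    rw [← Ico_add_one_right_eq_Icc, sum_Ico_eq_sum_range]
    calc ∑ u ∈ range (2 ^ (N * d) + 1 - k), (2 * (2 : ℝ) ^ ((k : ℤ) - (k + u : ℕ))) ^ d
        ≤ ∑ u ∈ range (2 ^ (N * d) + 1 - k), 2 ^ d * (1 / 2 : ℝ) ^ u := by
          refine sum_le_sum fun u _ => ?_
          have hu : (2 : ℝ) ^ ((k : ℤ) - (k + u : ℕ)) = (1 / 2) ^ u := by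
            simp
          rw [hu, mul_pow]
          gcongr
          exact pow_le_of_le_one (by positivity) (pow_le_one₀ (by norm_num) (by norm_num))
            (by omega)
      _ ≤ 2 ^ (d + 1) := by
          rw [← mul_sum, pow_succ]
          gcongr
          exact sum_geometric_two_le _
  calc ∑ j ∈ Icc k (2 ^ (N * d)), ((2 : ℝ) ^ (-(N : ℤ) - M) + 2 * 2 ^ ((k : ℤ) - j)) ^ d
      ≤ ∑ j ∈ Icc k (2 ^ (N * d)),
          2 ^ (d - 1) * (((2 : ℝ) ^ (-(N : ℤ) - M)) ^ d + (2 * 2 ^ ((k : ℤ) - j)) ^ d) :=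
        sum_le_sum fun j _ => add_pow_le (by positivity) (by positivity) d
    _ = 2 ^ (d - 1) * ((#(Icc k (2 ^ (N * d))) : ℝ) * ((2 : ℝ) ^ (-(N : ℤ) - M)) ^ d
          + ∑ j ∈ Icc k (2 ^ (N * d)), (2 * (2 : ℝ) ^ ((k : ℤ) - j)) ^ d) := by
        rw [← mul_sum, sum_add_distrib, sum_const, nsmul_eq_mul]
    _ ≤ scaleSumBound d := by
        unfold scaleSumBound
        gcongr
        exact card_Icc_mul_pow_le_two N M d k

theorem setLIntegral_cubePi_tailCount_pow_le {d : ℕ} (hd : 1 ≤ d) (N M m : ℕ) :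
    ∀ (k : ℕ) (c : ℝ) (A : Set ℝ), CoveredByIntervals c (cubeSide M k) A →
      ∫⁻ x in cubePi d A, tailCount (cubeUnion d N M) (2 ^ (N * d)) k x ^ m
        ≤ ENNReal.ofReal (m ! * scaleSumBound d ^ m * (c * cubeSide M k) ^ d) := by
  have hB := scaleSumBound_nonneg d
  induction m with
  | zero =>
    intro k c A hA
    have hℓ := cubeSide_pos M k
    have hc := hA.nonneg
    simp only [pow_zero, setLIntegral_one, volume_cubePi, Nat.factorial_zero, Nat.cast_one, one_mul]
    rw [ENNReal.ofReal_pow (by positivity)]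
    gcongr
    exact hA.volume_le hℓ.le
  | succ m ih =>
    intro k c A hA
    have hℓ := cubeSide_pos M k
    have hc := hA.nonneg
    calc ∫⁻ x in cubePi d A, tailCount (cubeUnion d N M) (2 ^ (N * d)) k x ^ (m + 1)
        ≤ (m + 1) * ∑ j ∈ Icc k (2 ^ (N * d)),
            ∫⁻ x in cubeUnion d N M j ∩ cubePi d A,
              tailCount (cubeUnion d N M) (2 ^ (N * d)) j x ^ m :=
          setLIntegral_tailCount_pow_succ_le _ (measurableSet_cubeUnion d N M) _ _ _ _
      _ ≤ (m + 1) * ∑ j ∈ Icc k (2 ^ (N * d)), ENNReal.ofReal (m ! * scaleSumBound d ^ m *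
            (c * (cubeSide M k / cubeSpacing N j + 2) * cubeSide M j) ^ d) := by
          gcongr with j
          rw [cubeUnion_eq_cubePi, ← cubePi_inter]
          exact ih j _ _ (hA.intervalUnion_inter hℓ.le N M j)
      _ = (m + 1) * ENNReal.ofReal (m ! * scaleSumBound d ^ m * (c * cubeSide M k) ^ d *
            ∑ j ∈ Icc k (2 ^ (N * d)), ((2 : ℝ) ^ (-(N : ℤ) - M) + 2 * 2 ^ ((k : ℤ) - j)) ^ d) := by
          congr 1
          rw [mul_sum, ENNReal.ofReal_sum_of_nonneg fun j _ => by positivity]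
          refine sum_congr rfl fun j _ => ?_
          rw [mul_assoc c, cubeSide_div_cubeSpacing_add_two_mul, ← mul_assoc,
            mul_pow (c * cubeSide M k), ← mul_assoc]
      _ ≤ (m + 1) * ENNReal.ofReal
            (m ! * scaleSumBound d ^ m * (c * cubeSide M k) ^ d * scaleSumBound d) := by
          gcongr
          exact sum_Icc_pow_add_two_pow_sub_le hd N M k
      _ = ENNReal.ofReal ((m + 1) ! * scaleSumBound d ^ (m + 1) * (c * cubeSide M k) ^ d) := by
          rw [show (m + 1 : ENNReal) = ENNReal.ofReal (m + 1) by simp [ENNReal.ofReal_add],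
            ← ENNReal.ofReal_mul (by positivity)]
          congr 1
          push_cast [Nat.factorial_succ]
          ring

theorem lintegral_tailCount_pow_succ_le {d : ℕ} (hd : 1 ≤ d) (N M m : ℕ) :
    ∫⁻ x, tailCount (cubeUnion d N M) (2 ^ (N * d)) N x ^ (m + 1)
      ≤ ENNReal.ofReal (2 * (m + 1) ! * scaleSumBound d ^ m) := by
  have hB := scaleSumBound_nonneg d
  calc ∫⁻ x, tailCount (cubeUnion d N M) (2 ^ (N * d)) N x ^ (m + 1)
      = ∫⁻ x in Set.univ, tailCount (cubeUnion d N M) (2 ^ (N * d)) N x ^ (m + 1) :=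
        (setLIntegral_univ _).symm
    _ ≤ (m + 1) * ∑ k ∈ Icc N (2 ^ (N * d)),
          ∫⁻ x in cubeUnion d N M k ∩ Set.univ,
            tailCount (cubeUnion d N M) (2 ^ (N * d)) k x ^ m :=
        setLIntegral_tailCount_pow_succ_le _ (measurableSet_cubeUnion d N M) _ _ _ _
    _ ≤ (m + 1) * ∑ k ∈ Icc N (2 ^ (N * d)),
          ENNReal.ofReal (m ! * scaleSumBound d ^ m *
            ((2 : ℝ) ^ (k - N) * cubeSide M k) ^ d) := by
        gcongr with k
        rw [Set.inter_univ, cubeUnion_eq_cubePi]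
        exact setLIntegral_cubePi_tailCount_pow_le hd N M m k _ _
          (coveredByIntervals_intervalUnion N M k)
    _ = (m + 1) * ENNReal.ofReal (m ! * scaleSumBound d ^ m *
          ((#(Icc N (2 ^ (N * d))) : ℝ) * ((2 : ℝ) ^ (-(N : ℤ) - M)) ^ d)) := by
        rw [← ENNReal.ofReal_sum_of_nonneg fun k _ => by positivity [cubeSide_pos M k]]
        congr 2
        rw [sum_congr rfl fun k hk => by rw [two_pow_sub_mul_cubeSide (mem_Icc.1 hk).1 M],
          ← mul_sum, sum_const, nsmul_eq_mul]
    _ ≤ (m + 1) * ENNReal.ofReal (m ! * scaleSumBound d ^ m * 2) := by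
        gcongr
        exact card_Icc_mul_pow_le_two N M d N
    _ = ENNReal.ofReal (2 * (m + 1) ! * scaleSumBound d ^ m) := by
        rw [show (m + 1 : ENNReal) = ENNReal.ofReal (m + 1) by simp [ENNReal.ofReal_add],
          ← ENNReal.ofReal_mul (by positivity)]
        congr 1
        push_cast [Nat.factorial_succ]
        ring

theorem sum_indicator_one_eq_card {ι α R : Type*} [AddCommMonoidWithOne R] (s : Finset ι)
    (E : ι → Set α) (x : α) [DecidablePred (x ∈ E ·)] :
    ∑ j ∈ s, (E j).indicator (fun _ => (1 : R)) x = #{j ∈ s | x ∈ E j} := by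
  simp [Set.indicator_apply, sum_boole]

theorem natCast_rpow_le_pow {r : ℝ} {m : ℕ} (hr : 0 < r) (hrm : r ≤ m + 1) (n : ℕ) :
    (n : ℝ) ^ r ≤ (n : ℝ) ^ (m + 1) := by
  rcases n.eq_zero_or_pos with rfl | hn
  · simp [Real.zero_rpow hr.ne']
  · rw [← Real.rpow_natCast]
    exact Real.rpow_le_rpow_of_exponent_le (by exact_mod_cast hn) (by exact_mod_cast hrm)

/-- For `0 < q ≤ p < ∞`, the `L^p` norm of `(∑_{k=N}^{2^{Nd}} h_k)^{1/q}` is bounded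
by a constant depending only on `p, q, d, M` and not on `N`. -/
theorem cubeUnion_lp_bounded (p q : ℝ) (d M : ℕ) (hq : 0 < q) (hqp : q ≤ p) (hd : 1 ≤ d) :
    ∃ C : ℝ, ∀ N : ℕ, 1 ≤ N →
      (∫ x : EuclideanSpace ℝ (Fin d),
          ((∑ k ∈ Finset.Icc N (2 ^ (N * d)),
              (cubeUnion d N M k).indicator (fun _ => (1 : ℝ)) x) ^ (1 / q)) ^ p) ^ (1 / p)
        ≤ C := by
  classical
  have hp : 0 < p := hq.trans_le hqp
  obtain ⟨m, hm⟩ : ∃ m : ℕ, p / q ≤ m + 1 := ⟨⌈p / q⌉₊, (Nat.le_ceil _).trans (by linarith)⟩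
  refine ⟨(2 * (m + 1) ! * scaleSumBound d ^ m) ^ (1 / p), fun N _ => ?_⟩
  have hmeas : Measurable fun x =>
      ∑ k ∈ Icc N (2 ^ (N * d)), (cubeUnion d N M k).indicator (fun _ => (1 : ℝ)) x :=
    Finset.measurable_sum _ fun k _ => measurable_const.indicator (measurableSet_cubeUnion d N M k)
  simp_rw [sum_indicator_one_eq_card] at hmeas ⊢
  refine Real.rpow_le_rpow (integral_nonneg fun x => by positivity) ?_ (by positivity)
  rw [integral_eq_lintegral_of_nonneg_ae (ae_of_all _ fun x => by positivity)
    ((hmeas.pow_const _).pow_const _).aestronglyMeasurable]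
  refine ENNReal.toReal_le_of_le_ofReal (by positivity [scaleSumBound_nonneg d])
    ((lintegral_mono fun x => ?_).trans (lintegral_tailCount_pow_succ_le hd N M m))
  rw [tailCount, sum_indicator_one_eq_card, ← Real.rpow_mul (Nat.cast_nonneg _),
    one_div_mul_eq_div, ← ENNReal.ofReal_natCast, ← ENNReal.ofReal_pow (Nat.cast_nonneg _)]
  exact ENNReal.ofReal_le_ofReal (natCast_rpow_le_pow (div_pos hp hq) hm _)
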